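/- Let A be a C*-algebra and D an abelian C*-subalgebra. If x₁, …, xₙ ∈ A all normalize D and satisfy xᵢ*xⱼ = 0 and xᵢxⱼ* = 0 whenever i ≠ j, then z = x₁ + ⋯ + xₙ is a normalizer of D, i.e., z*Dz + zDz* ⊆ D. -/

import Mathlib

/-!
Write `a = n⋆ d`. For `e` in the commutative algebra `D`, `n e n⋆ ∈ D` commutes with `d`, so
`n e a y = d (n e n⋆) y = 0` whenever `n⋆ y = 0`. Letting `e` run through an approximate unit of
`D` (which approximates `a a⋆ ∈ D`, hence `a` itself), this gives `n n⋆ d y = 0`; with `y = m` and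
`d⋆` in place of `d` this is `w w⋆ = 0` for `w = m⋆ d n`. Hence the cross terms of `z⋆ d z` and
`z d z⋆` vanish and both are sums of the elements `xᵢ⋆ d xᵢ`, resp. `xᵢ d xᵢ⋆`, of `D`.
-/

open Filter Topology

theorem Finset.sum_mul_mul_sum_of_ne {ι R : Type*} [NonUnitalNonAssocSemiring R] (s : Finset ι)
    (a b : ι → R) (d : R) (h : ∀ i j, i ≠ j → a i * d * b j = 0) :
    (∑ i ∈ s, a i) * d * (∑ j ∈ s, b j) = ∑ i ∈ s, a i * d * b i := by
  rw [Finset.sum_mul, Finset.sum_mul]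
  refine Finset.sum_congr rfl fun i hi => ?_
  rw [Finset.mul_sum]
  exact Finset.sum_eq_single_of_mem i hi fun j _ hji => h i j hji.symm

section CStarRing

variable {A : Type*} [NonUnitalNormedRing A] [StarRing A] [CStarRing A]

theorem norm_mul_sub_sq_le {e a : A} (he : ‖e‖ ≤ 1) :
    ‖e * a - a‖ ^ 2 ≤ 2 * ‖e * (a * star a) - a * star a‖ := by
  have hexpand : (e * a - a) * star (e * a - a)
      = (e * (a * star a) - a * star a) * star e - (e * (a * star a) - a * star a) := by
    simp only [star_sub, star_mul]
    noncomm_ring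
  calc ‖e * a - a‖ ^ 2 = ‖(e * a - a) * star (e * a - a)‖ := by
        rw [CStarRing.norm_self_mul_star, sq]
    _ ≤ ‖e * (a * star a) - a * star a‖ * ‖e‖ + ‖e * (a * star a) - a * star a‖ := by
        rw [hexpand, ← norm_star e]
        exact (norm_sub_le _ _).trans (add_le_add_left (norm_mul_le _ _) _)
    _ ≤ 2 * ‖e * (a * star a) - a * star a‖ := by
        nlinarith [norm_nonneg (e * (a * star a) - a * star a)]

theorem tendsto_mul_of_tendsto_mul_mul_star {ι : Type*} {l : Filter ι} {e : ι → A} {a : A}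
    (he : ∀ᶠ i in l, ‖e i‖ ≤ 1)
    (h : Tendsto (fun i => e i * (a * star a)) l (𝓝 (a * star a))) :
    Tendsto (fun i => e i * a) l (𝓝 a) := by
  rw [tendsto_iff_norm_sub_tendsto_zero] at h ⊢
  have hsq : Tendsto (fun i => ‖e i * a - a‖ ^ 2) l (𝓝 0) :=
    squeeze_zero' (.of_forall fun _ => sq_nonneg _) (he.mono fun _ => norm_mul_sub_sq_le)
      (by simpa using h.const_mul 2)
  simpa [Real.sqrt_sq (norm_nonneg _)] using hsq.sqrt

end CStarRing

theorem exists_isApproximateUnit_norm_le_one (B : Type*) [NonUnitalCStarAlgebra B] :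
    ∃ l : Filter B, l.IsApproximateUnit ∧ ∀ᶠ e in l, ‖e‖ ≤ 1 := by
  let _ := CStarAlgebra.spectralOrder B
  let _ := CStarAlgebra.spectralOrderedRing B
  exact ⟨_, (CStarAlgebra.increasingApproximateUnit B).toIsApproximateUnit,
    (CStarAlgebra.increasingApproximateUnit B).eventually_norm⟩

section Normalizer

variable {A : Type*} [NonUnitalCStarAlgebra A]

def IsNormalizer (D : NonUnitalStarSubalgebra ℂ A) (a : A) : Prop :=
  ∀ d ∈ D, star a * d * a ∈ D ∧ a * d * star a ∈ D

variable {D : NonUnitalStarSubalgebra ℂ A} {n : A}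

theorem IsNormalizer.mul_star_mul_mul_eq_zero (hD : IsClosed (D : Set A))
    (hcomm : ∀ x ∈ D, ∀ y ∈ D, x * y = y * x) (hn : IsNormalizer D n)
    {d y : A} (hd : d ∈ D) (hy : star n * y = 0) :
    n * star n * d * y = 0 := by
  have : IsClosed (D : Set A) := hD
  obtain ⟨l, hl, hl_norm⟩ := exists_isApproximateUnit_norm_le_one D
  have : l.NeBot := hl.neBot
  set a := star n * d
  have haD : a * star a ∈ D := by
    simpa only [a, star_mul, star_star, mul_assoc] using (hn _ (mul_mem hd (star_mem hd))).1
  have hlim : Tendsto (fun e : D => (e : A) * a) l (𝓝 a) :=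
    tendsto_mul_of_tendsto_mul_mul_star hl_norm
      (continuous_subtype_val.tendsto _ |>.comp (hl.tendsto_mul_right ⟨_, haD⟩))
  have hzero (e : D) : n * ((e : A) * a) * y = 0 :=
    calc n * ((e : A) * a) * y = n * e * star n * d * y := by simp only [a, mul_assoc]
      _ = d * (n * e * (star n * y)) := by
        rw [hcomm _ (hn e e.2).2 d hd]
        simp only [mul_assoc]
      _ = 0 := by rw [hy, mul_zero, mul_zero]
  calc n * star n * d * y = n * a * y := by simp only [a, mul_assoc]
    _ = 0 := tendsto_nhds_unique ((hlim.const_mul n).mul_const y)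
      (tendsto_const_nhds.congr fun e => (hzero e).symm)

theorem IsNormalizer.star_mul_mul_eq_zero (hD : IsClosed (D : Set A))
    (hcomm : ∀ x ∈ D, ∀ y ∈ D, x * y = y * x) (hn : IsNormalizer D n)
    {d m : A} (hd : d ∈ D) (hm : star n * m = 0) :
    star m * d * n = 0 := by
  rw [← CStarRing.mul_star_self_eq_zero_iff]
  calc star m * d * n * star (star m * d * n) = star m * d * (n * star n * star d * m) := by
        simp only [star_mul, star_star, mul_assoc]
    _ = 0 := by rw [hn.mul_star_mul_mul_eq_zero hD hcomm (star_mem hd) hm, mul_zero]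

theorem IsNormalizer.star (hn : IsNormalizer D n) : IsNormalizer D (star n) := fun d hd => by
  rw [star_star]
  exact (hn d hd).symm

end Normalizer

/-- if `D` is an abelian C*-subalgebra and `x₁,…,xₙ` normalize `D` with
`xᵢ* xⱼ = 0 = xᵢ xⱼ*` for `i ≠ j`, then `z = ∑ xᵢ` is a normalizer of `D`. -/
theorem sum_normalizer {A : Type*} [NonUnitalCStarAlgebra A]
    (D : NonUnitalStarSubalgebra ℂ A) (hD : IsClosed (D : Set A))
    (hcomm : ∀ x ∈ D, ∀ y ∈ D, x * y = y * x)
    (n : ℕ) (x : Fin n → A)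
    (hx : ∀ i, ∀ d ∈ D, star (x i) * d * x i ∈ D ∧ x i * d * star (x i) ∈ D)
    (horth₁ : ∀ i j, i ≠ j → star (x i) * x j = 0)
    (horth₂ : ∀ i j, i ≠ j → x i * star (x j) = 0) :
    ∀ d ∈ D, star (∑ i, x i) * d * (∑ i, x i) ∈ D ∧
      (∑ i, x i) * d * star (∑ i, x i) ∈ D := by
  intro d hd
  have hnorm (i : Fin n) : IsNormalizer D (x i) := hx i
  have hcross₁ (i j : Fin n) (hij : i ≠ j) : star (x i) * d * x j = 0 :=
    (hnorm j).star_mul_mul_eq_zero hD hcomm hd (horth₁ j i hij.symm)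
  have hcross₂ (i j : Fin n) (hij : i ≠ j) : x i * d * star (x j) = 0 := by
    simpa using (hnorm j).star.star_mul_mul_eq_zero hD hcomm hd
      (m := star (x i)) (by simpa using horth₂ j i hij.symm)
  rw [star_sum, Finset.sum_mul_mul_sum_of_ne _ _ _ _ hcross₁,
    Finset.sum_mul_mul_sum_of_ne _ _ _ _ hcross₂]
  exact ⟨sum_mem fun i _ => (hx i d hd).1, sum_mem fun i _ => (hx i d hd).2⟩
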